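/- arXiv:2102.07861 — 5 statements merged into one kernel-verified Lean document; each statement's English description precedes it below -/
import Mathlib

section
/- Let n ≥ 1, let g ∈ ℝⁿ be a nonzero vector, let H be a symmetric n×n real matrix, let ν > 0 satisfy δᵀHδ ≤ ν‖δ‖² for all δ ∈ ℝⁿ, and let c ≥ 0. Then every δ ∈ ℝⁿ satisfying gᵀδ + (1/2)δᵀHδ ≥ c has ‖δ‖ ≥ (‖g‖/ν)(√(1 + 2νc/‖g‖²) − 1). -/
open Matrix

/-! A feasible `δ` of norm `r` satisfies `c ≤ ‖g‖ r + (ν/2) r²` by Cauchy–Schwarz and the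
Rayleigh bound on `H`; the claimed bound is the positive root of this quadratic in `r`. -/

theorem EuclideanSpace.dotProduct_le_norm_mul_norm {ι : Type*} [Fintype ι]
    (x y : EuclideanSpace ℝ ι) : (x : ι → ℝ) ⬝ᵥ (y : ι → ℝ) ≤ ‖x‖ * ‖y‖ := by
  rw [dotProduct_comm, ← star_trivial (x : ι → ℝ), ← EuclideanSpace.inner_eq_star_dotProduct]
  exact real_inner_le_norm x y

theorem le_of_le_mul_add_half_mul_sq {G ν c r : ℝ} (hG : 0 < G) (hν : 0 < ν) (hr : 0 ≤ r)
    (h : c ≤ G * r + ν / 2 * r ^ 2) :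
    G / ν * (Real.sqrt (1 + 2 * ν * c / G ^ 2) - 1) ≤ r := by
  have hsqrt : Real.sqrt (1 + 2 * ν * c / G ^ 2) ≤ 1 + ν * r / G := by
    have hsq : (1 + ν * r / G) ^ 2 = 1 + 2 * ν * (G * r + ν / 2 * r ^ 2) / G ^ 2 := by
      field_simp
      ring
    rw [Real.sqrt_le_left (by positivity), hsq]
    gcongr
  calc G / ν * (Real.sqrt (1 + 2 * ν * c / G ^ 2) - 1)
      ≤ G / ν * (1 + ν * r / G - 1) := by gcongr
    _ = r := by field_simp; ring

theorem lemma1_lower_bound_general (n : ℕ)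
    (g : EuclideanSpace ℝ (Fin n)) (hg : g ≠ 0)
    (H : Matrix (Fin n) (Fin n) ℝ)
    (ν : ℝ) (hν : 0 < ν)
    (hRay : ∀ δ : EuclideanSpace ℝ (Fin n),
      (δ : Fin n → ℝ) ⬝ᵥ H.mulVec δ ≤ ν * ‖δ‖ ^ 2)
    (c : ℝ) :
    ∀ δ : EuclideanSpace ℝ (Fin n),
      c ≤ (g : Fin n → ℝ) ⬝ᵥ (δ : Fin n → ℝ) + (1 / 2) * ((δ : Fin n → ℝ) ⬝ᵥ H.mulVec δ) →
      (‖g‖ / ν) * (Real.sqrt (1 + 2 * ν * c / ‖g‖ ^ 2) - 1) ≤ ‖δ‖ := by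
  intro δ hδ
  refine le_of_le_mul_add_half_mul_sq (norm_pos_iff.mpr hg) hν (norm_nonneg δ) ?_
  linarith [EuclideanSpace.dotProduct_le_norm_mul_norm g δ, hRay δ]

/-- Lower bound of Lemma 1: every feasible adversarial perturbation
`δ` (i.e. with `gᵀδ + (1/2) δᵀHδ ≥ c`) has norm at least
`(‖g‖/ν)(√(1 + 2νc/‖g‖²) − 1)`. -/
theorem lemma1_lower_bound (n : ℕ) (hn : 1 ≤ n)
    (g : EuclideanSpace ℝ (Fin n)) (hg : g ≠ 0)
    (H : Matrix (Fin n) (Fin n) ℝ) (hH : H.IsSymm)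
    (ν : ℝ) (hν : 0 < ν)
    (hRay : ∀ δ : EuclideanSpace ℝ (Fin n),
      (δ : Fin n → ℝ) ⬝ᵥ H.mulVec δ ≤ ν * ‖δ‖ ^ 2)
    (c : ℝ) (hc : 0 ≤ c) :
    ∀ δ : EuclideanSpace ℝ (Fin n),
      c ≤ (g : Fin n → ℝ) ⬝ᵥ (δ : Fin n → ℝ) + (1 / 2) * ((δ : Fin n → ℝ) ⬝ᵥ H.mulVec δ) →
      (‖g‖ / ν) * (Real.sqrt (1 + 2 * ν * c / ‖g‖ ^ 2) - 1) ≤ ‖δ‖ :=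
  lemma1_lower_bound_general n g hg H ν hν hRay c
end

section
/- Let n ≥ 1, let g ∈ ℝⁿ, let H be a symmetric n×n real matrix, let ν > 0, let u be a unit vector with Hu = νu and gᵀu ≠ 0, and let c ≥ 0. Then there exists δ ∈ ℝⁿ with gᵀδ + (1/2)δᵀHδ ≥ c and ‖δ‖ = (|gᵀu|/ν)(√(1 + 2νc/(gᵀu)²) − 1); namely δ = t·sign(gᵀu)·u with t = (|gᵀu|/ν)(√(1 + 2νc/(gᵀu)²) − 1). -/
/-!
Along `δ = s • u` the quadratic model equals `s · gᵀu + (ν / 2) s²`. Choosing `s = t · sign (gᵀu)`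
turns the linear term into `t · |gᵀu|`, and `t` is the nonnegative root of
`(ν / 2) t² + |gᵀu| t = c`, so the constraint holds with equality and `‖δ‖ = |t| = t`.
-/

open Matrix

namespace Real

theorem sign_mul_self (r : ℝ) : sign r * r = |r| := by
  rcases lt_trichotomy r 0 with h | rfl | h
  · rw [sign_of_neg h, abs_of_neg h, neg_one_mul]
  · simp
  · rw [sign_of_pos h, abs_of_pos h, one_mul]

theorem abs_sign_of_ne_zero {r : ℝ} (hr : r ≠ 0) : |sign r| = 1 := by
  rcases sign_apply_eq_of_ne_zero r hr with h | h <;> simp [h]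

end Real

section QuadraticRoot

variable {ν b c : ℝ}

theorem quadratic_pos_root_nonneg (hν : 0 < ν) (hb : 0 ≤ b) (hc : 0 ≤ c) :
    0 ≤ b / ν * (√(1 + 2 * ν * c / b ^ 2) - 1) := by
  refine mul_nonneg (div_nonneg hb hν.le) (sub_nonneg.2 (Real.one_le_sqrt.2 ?_))
  exact le_add_of_nonneg_right (by positivity)

theorem quadratic_pos_root_eq (hν : ν ≠ 0) (hb : b ≠ 0) (hc : 0 ≤ 1 + 2 * ν * c / b ^ 2) :
    b * (b / ν * (√(1 + 2 * ν * c / b ^ 2) - 1)) +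
      1 / 2 * ((b / ν * (√(1 + 2 * ν * c / b ^ 2) - 1)) ^ 2 * ν) = c := by
  have hsq := Real.sq_sqrt hc
  set s := √(1 + 2 * ν * c / b ^ 2)
  field_simp at hsq ⊢
  linear_combination hsq

end QuadraticRoot

theorem Matrix.smul_dotProduct_mulVec_smul_of_mulVec_eq_smul {R ι : Type*} [CommRing R]
    [Fintype ι] {H : Matrix ι ι R} {u : ι → R} {ν : R} (hHu : H *ᵥ u = ν • u) (s : R) :
    (s • u) ⬝ᵥ H *ᵥ (s • u) = s ^ 2 * ν * (u ⬝ᵥ u) := by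
  rw [mulVec_smul, hHu, smul_dotProduct, dotProduct_smul, dotProduct_smul, smul_eq_mul,
    smul_eq_mul, smul_eq_mul]
  ring

theorem EuclideanSpace.dotProduct_self_eq_norm_sq {ι : Type*} [Fintype ι]
    (x : EuclideanSpace ℝ ι) : (x : ι → ℝ) ⬝ᵥ (x : ι → ℝ) = ‖x‖ ^ 2 := by
  rw [← real_inner_self_eq_norm_sq, EuclideanSpace.inner_eq_star_dotProduct, star_trivial]

theorem lemma1_upper_bound_witness_general (n : ℕ)
    (g : EuclideanSpace ℝ (Fin n))
    (H : Matrix (Fin n) (Fin n) ℝ)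
    (ν : ℝ) (hν : 0 < ν)
    (u : EuclideanSpace ℝ (Fin n)) (hu : ‖u‖ = 1)
    (hHu : H.mulVec u = ν • (u : Fin n → ℝ))
    (hgu : (g : Fin n → ℝ) ⬝ᵥ (u : Fin n → ℝ) ≠ 0)
    (c : ℝ) (hc : 0 ≤ c)
    (t : ℝ)
    (ht : t = (|(g : Fin n → ℝ) ⬝ᵥ (u : Fin n → ℝ)| / ν) *
      (Real.sqrt (1 + 2 * ν * c / ((g : Fin n → ℝ) ⬝ᵥ (u : Fin n → ℝ)) ^ 2) - 1)) :
    ∃ δ : EuclideanSpace ℝ (Fin n),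
      (c ≤ (g : Fin n → ℝ) ⬝ᵥ (δ : Fin n → ℝ) + (1 / 2) * ((δ : Fin n → ℝ) ⬝ᵥ H.mulVec δ) ∧
        ‖δ‖ = t) ∧
      δ = (t * Real.sign ((g : Fin n → ℝ) ⬝ᵥ (u : Fin n → ℝ))) • u := by
  set a := (g : Fin n → ℝ) ⬝ᵥ (u : Fin n → ℝ)
  rw [← sq_abs a] at ht
  have ht0 : 0 ≤ t := ht ▸ quadratic_pos_root_nonneg hν (abs_nonneg a) hc
  have hsign : |Real.sign a| = 1 := Real.abs_sign_of_ne_zero hgu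
  refine ⟨_, ⟨?_, ?_⟩, rfl⟩
  · have hroot := quadratic_pos_root_eq hν.ne' (abs_ne_zero.2 hgu) (c := c) (by positivity)
    rw [← ht] at hroot
    rw [WithLp.ofLp_smul, smul_dotProduct_mulVec_smul_of_mulVec_eq_smul hHu,
      EuclideanSpace.dotProduct_self_eq_norm_sq, hu, dotProduct_smul, smul_eq_mul, mul_assoc,
      Real.sign_mul_self, mul_pow, ← sq_abs (Real.sign a), hsign]
    linarith
  · rw [norm_smul, hu, Real.norm_eq_abs, abs_mul, hsign, abs_of_nonneg ht0, mul_one, mul_one]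

/-- Upper bound of Lemma 1: along the top unit eigenvector `u` of `H` (with `Hu = νu`,
`ν > 0`, `gᵀu ≠ 0`), the point `δ = t · sign(gᵀu) · u` with
`t = (|gᵀu|/ν)(√(1 + 2νc/(gᵀu)²) − 1)` is feasible (`gᵀδ + (1/2) δᵀHδ ≥ c`) and
has norm exactly `t`. -/
theorem lemma1_upper_bound_witness (n : ℕ) (hn : 1 ≤ n)
    (g : EuclideanSpace ℝ (Fin n))
    (H : Matrix (Fin n) (Fin n) ℝ) (hH : H.IsSymm)
    (ν : ℝ) (hν : 0 < ν)
    (u : EuclideanSpace ℝ (Fin n)) (hu : ‖u‖ = 1)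
    (hHu : H.mulVec u = ν • (u : Fin n → ℝ))
    (hgu : (g : Fin n → ℝ) ⬝ᵥ (u : Fin n → ℝ) ≠ 0)
    (c : ℝ) (hc : 0 ≤ c)
    (t : ℝ)
    (ht : t = (|(g : Fin n → ℝ) ⬝ᵥ (u : Fin n → ℝ)| / ν) *
      (Real.sqrt (1 + 2 * ν * c / ((g : Fin n → ℝ) ⬝ᵥ (u : Fin n → ℝ)) ^ 2) - 1)) :
    ∃ δ : EuclideanSpace ℝ (Fin n),
      (c ≤ (g : Fin n → ℝ) ⬝ᵥ (δ : Fin n → ℝ) + (1 / 2) * ((δ : Fin n → ℝ) ⬝ᵥ H.mulVec δ) ∧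
        ‖δ‖ = t) ∧
      δ = (t * Real.sign ((g : Fin n → ℝ) ⬝ᵥ (u : Fin n → ℝ))) • u :=
  lemma1_upper_bound_witness_general n g H ν hν u hu hHu hgu c hc t ht
end

section
/- Fix a > 0 and c > 0. The function ν ↦ (a/ν)(√(1 + 2νc/a²) − 1) is strictly decreasing on (0, ∞). In particular, decreasing the largest eigenvalue ν of the input Hessian strictly increases the lower bound on the minimal adversarial perturbation norm. -/
/-! Rationalising, `(a/ν)(√(1 + 2νc/a²) − 1) = (2c/a) / (√(1 + 2νc/a²) + 1)`, whose denominator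
is strictly increasing in `ν`. -/

open Set

lemma sqrt_one_add_sub_one_eq_div {x : ℝ} (hx : -1 ≤ x) :
    √(1 + x) - 1 = x / (√(1 + x) + 1) := by
  have hsq : √(1 + x) ^ 2 = 1 + x := Real.sq_sqrt (by linarith)
  rw [eq_div_iff (by positivity)]
  linear_combination hsq

lemma strictAntiOn_div_sqrt_one_add_mul_add_one {k b : ℝ} (hk : 0 < k) (hb : 0 < b) :
    StrictAntiOn (fun t => k / (√(1 + b * t) + 1)) (Ici 0) := by
  intro s hs t _ hst
  have hroot : √(1 + b * s) < √(1 + b * t) :=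
    Real.sqrt_lt_sqrt (by nlinarith [mem_Ici.mp hs]) (by gcongr)
  exact div_lt_div_of_pos_left hk (by positivity) (by linarith)

/-- For fixed gradient norm `a > 0` and margin `c > 0`, the robustness lower bound
`ν ↦ (a/ν)(√(1 + 2νc/a²) − 1)` of Lemma 1 is strictly decreasing in the curvature
`ν` on `(0, ∞)`: decreasing the largest eigenvalue of the input Hessian strictly
increases the lower bound on the minimal adversarial perturbation norm. -/
theorem phi_strictAnti_in_curvature (a c : ℝ) (ha : 0 < a) (hc : 0 < c) :
    StrictAntiOn (fun ν : ℝ => (a / ν) * (Real.sqrt (1 + 2 * ν * c / a ^ 2) - 1))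
      (Set.Ioi (0 : ℝ)) := by
  have hanti := strictAntiOn_div_sqrt_one_add_mul_add_one (k := 2 * c / a) (b := 2 * c / a ^ 2)
    (by positivity) (by positivity)
  refine (hanti.mono Ioi_subset_Ici_self).congr fun ν (hν : 0 < ν) => ?_
  have hreorder : 2 * ν * c / a ^ 2 = 2 * c / a ^ 2 * ν := by ring
  have hrat := sqrt_one_add_sub_one_eq_div (x := 2 * ν * c / a ^ 2)
    (by linarith [show 0 ≤ 2 * ν * c / a ^ 2 by positivity])
  simp only [← hreorder, hrat]
  field_simp
end

section
/- Let w₁ be an m×n real matrix with operator norm ‖w₁‖, w₂ ∈ ℝᵐ, and σ : ℝ → ℝ be twice differentiable with |σ″(t)| ≤ M for all t ∈ ℝ. Define f(x) = Σᵢ (w₂)ᵢ · σ((w₁x)ᵢ). Then for every x, δ ∈ ℝⁿ, |δᵀ(∇²f(x))δ| ≤ M · (maxᵢ |(w₂)ᵢ|) · ‖w₁‖² · ‖δ‖². In particular, every eigenvalue of the input Hessian ∇²f(x) has absolute value at most M · (maxᵢ |(w₂)ᵢ|) · ‖w₁‖². -/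
/-!
The input Hessian of a ridge sum `x ↦ ∑ᵢ cᵢ σ(ℓᵢ x)` is `∑ᵢ cᵢ σ″(ℓᵢ x) ℓᵢ ⊗ ℓᵢ`; for the rows `ℓᵢ`
of `w₁` this is the matrix `w₁ᵀ diag(w₂ ⊙ σ″(w₁x)) w₁`. Its quadratic form at `δ` is a sum of the
squares of the entries of `w₁δ`, weighted by numbers of size at most `M · maxᵢ |(w₂)ᵢ|`, so it is
bounded by that constant times `‖w₁δ‖² ≤ ‖w₁‖² ‖δ‖²`. At an eigenvector `v` the quadratic form
equals `μ ‖v‖²`, which gives the eigenvalue bound.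
-/
open Matrix
open scoped Matrix.Norms.L2Operator

section RidgeSum

variable {E ι : Type*} [NormedAddCommGroup E] [NormedSpace ℝ E] [Fintype ι]
  {g : ℝ → ℝ} (c : ι → ℝ) (ℓ : ι → StrongDual ℝ E)

theorem hasFDerivAt_sum_mul_comp (hg : Differentiable ℝ g) (y : E) :
    HasFDerivAt (fun z => ∑ i, c i * g (ℓ i z)) (∑ i, (c i * deriv g (ℓ i y)) • ℓ i) y := by
  refine HasFDerivAt.fun_sum fun i _ => ?_
  simpa [smul_smul] using
    ((hg (ℓ i y)).hasDerivAt.comp_hasFDerivAt y (ℓ i).hasFDerivAt).const_mul (c i)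

theorem fderiv_fderiv_sum_mul_comp_apply (hg : Differentiable ℝ g)
    (hg' : Differentiable ℝ (deriv g)) (x δ δ' : E) :
    fderiv ℝ (fun y => fderiv ℝ (fun z => ∑ i, c i * g (ℓ i z)) y δ) x δ' =
      ∑ i, c i * deriv (deriv g) (ℓ i x) * ℓ i δ * ℓ i δ' := by
  -- The directional derivative along `δ` is again a ridge sum, with `deriv g` in place of `g`.
  have hfirst : (fun y => fderiv ℝ (fun z => ∑ i, c i * g (ℓ i z)) y δ) =
      fun y => ∑ i, (c i * ℓ i δ) * deriv g (ℓ i y) := by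
    funext y
    simp only [(hasFDerivAt_sum_mul_comp c ℓ hg y).fderiv, _root_.sum_apply,
      _root_.smul_apply, smul_eq_mul]
    exact Finset.sum_congr rfl fun i _ => by ring
  simp only [hfirst, (hasFDerivAt_sum_mul_comp (fun i => c i * ℓ i δ) ℓ hg' x).fderiv,
    _root_.sum_apply, _root_.smul_apply, smul_eq_mul]
  exact Finset.sum_congr rfl fun i _ => by ring

end RidgeSum

theorem EuclideanSpace.norm_sq_eq_dotProduct {n : Type*} [Fintype n] (v : EuclideanSpace ℝ n) :
    ‖v‖ ^ 2 = (v : n → ℝ) ⬝ᵥ v := by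
  rw [← real_inner_self_eq_norm_sq, EuclideanSpace.inner_eq_star_dotProduct, star_trivial]

namespace Matrix

variable {m n : Type*} [Fintype m] [Fintype n]

theorem abs_dotProduct_diagonal_mulVec_le [DecidableEq m] {a : m → ℝ} {C : ℝ}
    (ha : ∀ i, |a i| ≤ C) (u : m → ℝ) :
    |u ⬝ᵥ diagonal a *ᵥ u| ≤ C * ‖WithLp.toLp 2 u‖ ^ 2 := by
  rw [EuclideanSpace.norm_sq_eq_dotProduct, WithLp.ofLp_toLp, dotProduct, dotProduct,
    Finset.mul_sum]
  refine (Finset.abs_sum_le_sum_abs _ _).trans (Finset.sum_le_sum fun i _ => ?_)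
  rw [mulVec_diagonal, abs_mul, abs_mul, ← mul_assoc, mul_comm |u i|, mul_assoc,
    abs_mul_abs_self]
  exact mul_le_mul_of_nonneg_right (ha i) (mul_self_nonneg _)

theorem abs_dotProduct_transpose_mul_diagonal_mul_mulVec_le [DecidableEq m] [DecidableEq n]
    (A : Matrix m n ℝ) {a : m → ℝ} {C : ℝ} (hC : 0 ≤ C) (ha : ∀ i, |a i| ≤ C)
    (v : EuclideanSpace ℝ n) :
    |(v : n → ℝ) ⬝ᵥ (Aᵀ * diagonal a * A) *ᵥ v| ≤ C * ‖A‖ ^ 2 * ‖v‖ ^ 2 := by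
  have hpull : (v : n → ℝ) ⬝ᵥ (Aᵀ * diagonal a * A) *ᵥ v =
      (A *ᵥ v) ⬝ᵥ diagonal a *ᵥ (A *ᵥ v) := by
    rw [← mulVec_mulVec, ← mulVec_mulVec, dotProduct_mulVec, vecMul_transpose]
  calc |(v : n → ℝ) ⬝ᵥ (Aᵀ * diagonal a * A) *ᵥ v|
      ≤ C * ‖WithLp.toLp 2 (A *ᵥ v)‖ ^ 2 := hpull ▸ abs_dotProduct_diagonal_mulVec_le ha _
    _ ≤ C * (‖A‖ * ‖v‖) ^ 2 := by gcongr; exact A.l2_opNorm_mulVec v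
    _ = C * ‖A‖ ^ 2 * ‖v‖ ^ 2 := by ring

theorem abs_le_of_mulVec_eq_smul (A : Matrix n n ℝ) {μ C : ℝ} {v : EuclideanSpace ℝ n}
    (hv : v ≠ 0) (hAv : A *ᵥ v = μ • (v : n → ℝ))
    (hA : |(v : n → ℝ) ⬝ᵥ A *ᵥ v| ≤ C * ‖v‖ ^ 2) : |μ| ≤ C := by
  have hpos : 0 < ‖v‖ ^ 2 := by positivity
  rw [hAv, dotProduct_smul, smul_eq_mul, ← EuclideanSpace.norm_sq_eq_dotProduct, abs_mul,
    abs_of_pos hpos] at hA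
  exact le_of_mul_le_mul_right hA hpos

theorem of_single_single_eq_of_forall_eq_dotProduct_mulVec [DecidableEq n]
    {B : EuclideanSpace ℝ n → EuclideanSpace ℝ n → ℝ} {H : Matrix n n ℝ}
    (hB : ∀ δ δ', B δ δ' = (δ' : n → ℝ) ⬝ᵥ H *ᵥ δ) :
    (of fun j k => B (WithLp.toLp 2 (Pi.single k 1)) (WithLp.toLp 2 (Pi.single j 1))) = H := by
  ext j k
  simp [hB]

end Matrix

section TwoLayer

variable {m n : Type*} [Fintype m] [Fintype n] [DecidableEq m]

noncomputable def twoLayerInputHessian (w₁ : Matrix m n ℝ) (w₂ : m → ℝ) (σ : ℝ → ℝ)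
    (x : EuclideanSpace ℝ n) : Matrix n n ℝ :=
  w₁ᵀ * diagonal (fun i => w₂ i * deriv (deriv σ) ((w₁ *ᵥ x) i)) * w₁

theorem fderiv_fderiv_twoLayer_apply (w₁ : Matrix m n ℝ) (w₂ : m → ℝ) {σ : ℝ → ℝ}
    (hσ : Differentiable ℝ σ) (hσ' : Differentiable ℝ (deriv σ)) (x δ δ' : EuclideanSpace ℝ n) :
    fderiv ℝ (fun y => fderiv ℝ (fun z : EuclideanSpace ℝ n => ∑ i, w₂ i * σ ((w₁ *ᵥ z) i)) y δ)
        x δ' = (δ' : n → ℝ) ⬝ᵥ twoLayerInputHessian w₁ w₂ σ x *ᵥ δ := by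
  classical
  let row : m → StrongDual ℝ (EuclideanSpace ℝ n) := fun i =>
    (EuclideanSpace.proj i).comp (toEuclideanLin w₁).toContinuousLinearMap
  refine (fderiv_fderiv_sum_mul_comp_apply w₂ row hσ hσ' x δ δ').trans ?_
  rw [twoLayerInputHessian, ← mulVec_mulVec, ← mulVec_mulVec, dotProduct_mulVec,
    vecMul_transpose, dotProduct]
  refine Finset.sum_congr rfl fun i _ => ?_
  change w₂ i * deriv (deriv σ) ((w₁ *ᵥ x) i) * (w₁ *ᵥ δ) i * (w₁ *ᵥ δ') i = _
  rw [mulVec_diagonal]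
  ring

end TwoLayer

/-- If the activation `σ` of the two-layer network `f(x) = Σᵢ (w₂)ᵢ σ((w₁x)ᵢ)` has
curvature bounded by `M` (i.e. `|σ″| ≤ M`), then the quadratic form of the input
Hessian is bounded: `|δᵀ (∇²f(x)) δ| ≤ M · (maxᵢ |(w₂)ᵢ|) · ‖w₁‖² · ‖δ‖²` (with `‖w₁‖`
the ℓ²-operator norm), and in particular every eigenvalue of the input Hessian has
absolute value at most `M · (maxᵢ |(w₂)ᵢ|) · ‖w₁‖²`. -/
theorem two_layer_hessian_bound (m n : ℕ)
    (w₁ : Matrix (Fin m) (Fin n) ℝ) (w₂ : Fin m → ℝ)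
    (σ : ℝ → ℝ) (hσ : Differentiable ℝ σ) (hσ' : Differentiable ℝ (deriv σ))
    (M : ℝ) (hM : ∀ t : ℝ, |deriv (deriv σ) t| ≤ M)
    (f : EuclideanSpace ℝ (Fin n) → ℝ)
    (hf : f = fun x => ∑ i, w₂ i * σ (w₁.mulVec (WithLp.ofLp x) i)) :
    (∀ x δ : EuclideanSpace ℝ (Fin n),
      |fderiv ℝ (fun y => fderiv ℝ f y δ) x δ| ≤
        M * (⨆ i, |w₂ i|) * ‖w₁‖ ^ 2 * ‖δ‖ ^ 2) ∧
    (∀ x : EuclideanSpace ℝ (Fin n), ∀ μ : ℝ, ∀ v : EuclideanSpace ℝ (Fin n), v ≠ 0 →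
      (Matrix.of fun j k =>
          fderiv ℝ (fun y => fderiv ℝ f y (WithLp.toLp 2 (Pi.single k (1 : ℝ)))) x
            (WithLp.toLp 2 (Pi.single j (1 : ℝ)))).mulVec v = μ • (v : Fin n → ℝ) →
      |μ| ≤ M * (⨆ i, |w₂ i|) * ‖w₁‖ ^ 2) := by
  subst hf
  have hS : 0 ≤ ⨆ i, |w₂ i| := Real.iSup_nonneg fun i => abs_nonneg (w₂ i)
  have hC : 0 ≤ M * ⨆ i, |w₂ i| := mul_nonneg ((abs_nonneg _).trans (hM 0)) hS
  have hcoeff (x : EuclideanSpace ℝ (Fin n)) (i : Fin m) :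
      |w₂ i * deriv (deriv σ) ((w₁ *ᵥ x) i)| ≤ M * ⨆ i, |w₂ i| := by
    rw [abs_mul, mul_comm M]
    exact mul_le_mul (le_ciSup (Finite.bddAbove_range fun i => |w₂ i|) i) (hM _)
      (abs_nonneg _) hS
  have hquad (x δ : EuclideanSpace ℝ (Fin n)) :
      |(δ : Fin n → ℝ) ⬝ᵥ twoLayerInputHessian w₁ w₂ σ x *ᵥ δ| ≤
        M * (⨆ i, |w₂ i|) * ‖w₁‖ ^ 2 * ‖δ‖ ^ 2 :=
    abs_dotProduct_transpose_mul_diagonal_mul_mulVec_le w₁ hC (hcoeff x) δ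
  refine ⟨fun x δ => ?_, fun x μ v hv hHv => ?_⟩
  · rw [fderiv_fderiv_twoLayer_apply w₁ w₂ hσ hσ']
    exact hquad x δ
  · rw [of_single_single_eq_of_forall_eq_dotProduct_mulVec
      (fderiv_fderiv_twoLayer_apply w₁ w₂ hσ hσ' x)] at hHv
    exact abs_le_of_mulVec_eq_smul _ hv hHv (hquad x v)
end

section
/- Let s(x) = 1/(1 + exp(−x)) be the sigmoid function and for β ∈ ℝ let PSwish_β(x) = x·s(βx). Then for every x ∈ ℝ, PSwish_β(x) tends to max(x, 0) as β → ∞. -/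
open Filter Topology

noncomputable def sigmoid (x : ℝ) : ℝ := 1 / (1 + Real.exp (-x))

noncomputable def PSwish (β x : ℝ) : ℝ := x * sigmoid (β * x)

theorem sigmoid_eq_real_sigmoid : sigmoid = Real.sigmoid :=
  funext fun _ => one_div _

@[simp]
theorem pswish_zero_right (β : ℝ) : PSwish β 0 = 0 :=
  zero_mul _

theorem tendsto_pswish_of_pos {x : ℝ} (hx : 0 < x) :
    Tendsto (fun β : ℝ => PSwish β x) atTop (𝓝 x) := by
  have hβx : Tendsto (fun β : ℝ => β * x) atTop atTop := tendsto_id.atTop_mul_const hx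
  have hsig := (Real.tendsto_sigmoid_atTop.comp hβx).const_mul x
  simpa [PSwish, sigmoid_eq_real_sigmoid] using hsig

theorem tendsto_pswish_of_neg {x : ℝ} (hx : x < 0) :
    Tendsto (fun β : ℝ => PSwish β x) atTop (𝓝 0) := by
  have hβx : Tendsto (fun β : ℝ => β * x) atTop atBot := tendsto_id.atTop_mul_const_of_neg hx
  have hsig := (Real.tendsto_sigmoid_atBot.comp hβx).const_mul x
  simpa [PSwish, sigmoid_eq_real_sigmoid] using hsig

/-- Parametric Swish `PSwish_β(x) = x·sigmoid(βx)` transitions to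
`ReLU(x) = max(x, 0)` pointwise as `β → ∞`. -/
theorem pswish_tendsto_relu (x : ℝ) :
    Tendsto (fun β : ℝ => PSwish β x) atTop (𝓝 (max x 0)) := by
  rcases lt_trichotomy x 0 with hx | rfl | hx
  · simpa [max_eq_right hx.le] using tendsto_pswish_of_neg hx
  · simp
  · simpa [max_eq_left hx.le] using tendsto_pswish_of_pos hx
end
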